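/- Let f(x) = (1/2)(x^T P x + 2 q^T x + r) + I_{F,g}(x) be an extended quadratic function on R^n with nonempty constraint set having free parameter representation x = x_0 + V_2 z. Then f is strictly convex on its domain if and only if V_2^T P V_2 is positive definite. -/

import Mathlib

open Matrix

/-!
For `a + b = 1` the Jensen gap `a f x + b f y - f (a x + b y)` of the quadratic part equals
`a b / 2 · (x - y)ᵀ P (x - y)`, so `f` is strictly convex on a convex set exactly when this
quadratic form is positive on all nonzero differences of points of the set. For the affine set
`{x | F x + g = 0}` (nonempty thanks to `x₀`) these differences are the nonzero vectors of
`ker F = range V₂`, i.e. the `V₂ z` with `z ≠ 0`, and `(V₂ z)ᵀ P (V₂ z) = zᵀ (V₂ᵀ P V₂) z`.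
-/

/-- The quadratic part of an extended quadratic function:
`(1/2)(xᵀ P x + 2 qᵀ x + r)`. -/
noncomputable def quadPart {n : ℕ} (P : Matrix (Fin n) (Fin n) ℝ) (q : Fin n → ℝ) (r : ℝ)
    (x : Fin n → ℝ) : ℝ :=
  (1 / 2) * (x ⬝ᵥ P.mulVec x + 2 * (q ⬝ᵥ x) + r)

section QuadPart

variable {n : ℕ} (P : Matrix (Fin n) (Fin n) ℝ) (q : Fin n → ℝ) (r : ℝ)

theorem quadPart_jensen_gap (x y : Fin n → ℝ) {a b : ℝ} (hab : a + b = 1) :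
    a * quadPart P q r x + b * quadPart P q r y - quadPart P q r (a • x + b • y) =
      a * b / 2 * ((x - y) ⬝ᵥ P *ᵥ (x - y)) := by
  obtain rfl : b = 1 - a := by linarith
  simp only [quadPart, mulVec_add, mulVec_smul, mulVec_sub, dotProduct_add, add_dotProduct,
    dotProduct_smul, smul_dotProduct, dotProduct_sub, sub_dotProduct, smul_eq_mul]
  ring

theorem strictConvexOn_quadPart_iff {s : Set (Fin n → ℝ)} (hs : Convex ℝ s) :
    StrictConvexOn ℝ s (quadPart P q r) ↔
      ∀ x ∈ s, ∀ y ∈ s, x ≠ y → 0 < (x - y) ⬝ᵥ P *ᵥ (x - y) := by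
  constructor
  · intro hf x hx y hy hxy
    have hlt := hf.2 hx hy hxy (one_half_pos (α := ℝ)) one_half_pos (add_halves 1)
    have hgap := quadPart_jensen_gap P q r x y (a := 1 / 2) (b := 1 / 2) (by norm_num)
    simp only [smul_eq_mul] at hlt
    nlinarith
  · refine fun hQ ↦ ⟨hs, fun x hx y hy hxy a b ha hb hab ↦ ?_⟩
    have hgap := quadPart_jensen_gap P q r x y hab
    have := mul_pos (mul_pos ha hb) (hQ x hx y hy hxy)
    simp only [smul_eq_mul]
    linarith

end QuadPart

theorem convex_setOf_mulVec_add_eq_zero {m n 𝕜 : Type*} [Fintype n] [CommRing 𝕜]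
    [PartialOrder 𝕜] [IsOrderedRing 𝕜] (F : Matrix m n 𝕜) (g : m → 𝕜) :
    Convex 𝕜 {x | F *ᵥ x + g = 0} := by
  intro x hx y hy a b _ _ hab
  simp only [Set.mem_ofPred_eq, mulVec_add, mulVec_smul] at hx hy ⊢
  linear_combination (norm := module) a • hx + b • hy - hab • g

theorem forall_ne_sub_of_mulVec_add_eq_zero_iff {m n R : Type*} [Fintype n] [Ring R]
    (F : Matrix m n R) (g : m → R) {x₀ : n → R} (hx₀ : F *ᵥ x₀ + g = 0) (φ : (n → R) → Prop) :
    (∀ x ∈ {x | F *ᵥ x + g = 0}, ∀ y ∈ {x | F *ᵥ x + g = 0}, x ≠ y → φ (x - y)) ↔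
      ∀ d, F *ᵥ d = 0 → d ≠ 0 → φ d := by
  constructor
  · intro h d hd hd0
    have hmem : x₀ + d ∈ {x | F *ᵥ x + g = 0} := by
      simpa [mulVec_add, hd, add_right_comm] using hx₀
    simpa using h _ hmem x₀ hx₀ (by simpa using hd0)
  · intro h x hx y hy hxy
    refine h _ ?_ (sub_ne_zero.mpr hxy)
    rw [mulVec_sub]
    exact sub_eq_zero.mpr (add_right_cancel (hx.trans hy.symm))

theorem forall_ker_iff_of_ker_eq_range {m n k R : Type*} [Fintype n] [Fintype k] [Semiring R]
    {F : Matrix m n R} {V : Matrix n k R} (hker : ∀ x, F *ᵥ x = 0 ↔ ∃ z, x = V *ᵥ z)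
    (hV : ∀ z, V *ᵥ z = 0 → z = 0) (φ : (n → R) → Prop) :
    (∀ d, F *ᵥ d = 0 → d ≠ 0 → φ d) ↔ ∀ z, z ≠ 0 → φ (V *ᵥ z) := by
  constructor
  · intro h z hz
    exact h _ ((hker _).mpr ⟨z, rfl⟩) (mt (hV z) hz)
  · rintro h d hd hd0
    obtain ⟨z, rfl⟩ := (hker d).mp hd
    exact h z (by rintro rfl; exact hd0 (mulVec_zero V))

theorem Matrix.posDef_conjTranspose_mul_mul_iff {m n R : Type*} [Fintype m] [Fintype n]
    [Ring R] [PartialOrder R] [StarRing R] {A : Matrix n n R} (hA : A.IsHermitian)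
    (B : Matrix n m R) :
    (Bᴴ * A * B).PosDef ↔ ∀ z, z ≠ 0 → 0 < star (B *ᵥ z) ⬝ᵥ A *ᵥ (B *ᵥ z) := by
  rw [posDef_iff_dotProduct_mulVec, and_iff_right (isHermitian_conjTranspose_mul_mul B hA)]
  simp only [star_mulVec, dotProduct_mulVec, vecMul_vecMul, ← mulVec_mulVec]

/-- an extended quadratic with nonempty constraint set and free parameter
representation `x = x₀ + V₂ z` is strictly convex on its domain `{x | Fx + g = 0}`
iff `V₂ᵀ P V₂` is positive definite. -/
theorem extQuad_strictConvex_iff {n l p : ℕ}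
    (P : Matrix (Fin n) (Fin n) ℝ) (hP : P.IsSymm) (q : Fin n → ℝ) (r : ℝ)
    (F : Matrix (Fin p) (Fin n) ℝ) (g : Fin p → ℝ)
    (x₀ : Fin n → ℝ) (hx₀ : F.mulVec x₀ + g = 0)
    (V₂ : Matrix (Fin n) (Fin l) ℝ)
    (hV₂ : ∀ x, F.mulVec x = 0 ↔ ∃ z, x = V₂.mulVec z)
    (hV₂inj : ∀ z, V₂.mulVec z = 0 → z = 0) :
    StrictConvexOn ℝ {x | F.mulVec x + g = 0} (quadPart P q r) ↔
      (V₂.transpose * P * V₂).PosDef := by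
  rw [strictConvexOn_quadPart_iff P q r (convex_setOf_mulVec_add_eq_zero F g),
    forall_ne_sub_of_mulVec_add_eq_zero_iff F g hx₀ (fun d ↦ 0 < d ⬝ᵥ P *ᵥ d),
    forall_ker_iff_of_ker_eq_range hV₂ hV₂inj (fun d ↦ 0 < d ⬝ᵥ P *ᵥ d),
    ← conjTranspose_eq_transpose_of_trivial,
    posDef_conjTranspose_mul_mul_iff (isHermitian_iff_isSymm.mpr hP)]
  simp only [star_trivial]
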